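/- arXiv:2505.12297 — 2 statements merged into one kernel-verified Lean document; each statement's English description precedes it below -/
import Mathlib

section
/- Let 0 < ε and let μ_l ≤ μ_a, μ_b ≤ μ_r with λ − μ ≥ ε for all μ ∈ [μ_l, μ_r], where λ ≤ Λ for some Λ ≥ μ_r. Then |√(1+λ)/√(λ−μ_a) − √(1+λ)/√(λ−μ_b)| ≤ (1/(2ε))·√(1 + (Λ+1)/ε) · |μ_a − μ_b|. -/
lemma inv_sqrt_lip {ε a b : ℝ} (hε : 0 < ε) (ha : ε ≤ a) (hb : ε ≤ b) :
    |1 / Real.sqrt a - 1 / Real.sqrt b| ≤ |a - b| / (2 * ε * Real.sqrt ε) := by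
  wlog hab : a ≤ b generalizing a b
  · rw [abs_sub_comm, abs_sub_comm a b]; exact this hb ha (le_of_not_ge hab)
  have ha0 : (0:ℝ) < a := hε.trans_le ha
  have hb0 : (0:ℝ) < b := hε.trans_le hb
  have hse : 0 < Real.sqrt ε := Real.sqrt_pos.mpr hε
  have hsa : Real.sqrt ε ≤ Real.sqrt a := Real.sqrt_le_sqrt ha
  have hsb : Real.sqrt ε ≤ Real.sqrt b := Real.sqrt_le_sqrt hb
  have hsa0 : 0 < Real.sqrt a := hse.trans_le hsa
  have hsb0 : 0 < Real.sqrt b := hse.trans_le hsb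
  have hsqa : Real.sqrt a ^ 2 = a := Real.sq_sqrt ha0.le
  have hsqb : Real.sqrt b ^ 2 = b := Real.sq_sqrt hb0.le
  have hsqe : Real.sqrt ε ^ 2 = ε := Real.sq_sqrt hε.le
  have h1 : (Real.sqrt b - Real.sqrt a) * (Real.sqrt a + Real.sqrt b) = b - a := by
    linear_combination hsqb - hsqa
  have hkey : 1 / Real.sqrt a - 1 / Real.sqrt b
      = (b - a) / (Real.sqrt a * Real.sqrt b * (Real.sqrt a + Real.sqrt b)) := by
    rw [div_sub_div _ _ hsa0.ne' hsb0.ne', div_eq_div_iff (by positivity) (by positivity)]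
    linear_combination (Real.sqrt a * Real.sqrt b) * h1
  have hD : 2 * ε * Real.sqrt ε ≤ Real.sqrt a * Real.sqrt b * (Real.sqrt a + Real.sqrt b) := by
    nlinarith [mul_le_mul hsa hsb hse.le hsa0.le]
  rw [hkey, abs_sub_comm, abs_div, abs_of_nonneg (by positivity :
      (0:ℝ) ≤ Real.sqrt a * Real.sqrt b * (Real.sqrt a + Real.sqrt b)),
      abs_of_nonneg (by linarith : (0:ℝ) ≤ b - a)]
  exact div_le_div_of_nonneg_left (by linarith) (by positivity) hD

/-- Entrywise Lipschitz estimate for the diagonal operator `T(δ,μ)`. -/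
theorem stmt7 (ε lam Λ μl μr μa μb : ℝ) (hε : 0 < ε)
    (hμl : 0 ≤ μl) (hμlr : μl ≤ μr) (hΛμ : μr ≤ Λ)
    (ha : μa ∈ Set.Icc μl μr) (hb : μb ∈ Set.Icc μl μr)
    (hgap : ∀ μ ∈ Set.Icc μl μr, lam - μ ≥ ε) (hlam : lam ≤ Λ) :
    |Real.sqrt (1 + lam) / Real.sqrt (lam - μa)
      - Real.sqrt (1 + lam) / Real.sqrt (lam - μb)|
      ≤ (1 / (2 * ε)) * Real.sqrt (1 + (Λ + 1) / ε) * |μa - μb| := by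
  have hA : ε ≤ lam - μa := hgap μa ha
  have hB : ε ≤ lam - μb := hgap μb hb
  have hlampos : 0 < 1 + lam := by
    have := ha.1
    nlinarith
  have hse : 0 < Real.sqrt ε := Real.sqrt_pos.mpr hε
  have h1 : Real.sqrt (1 + lam) / Real.sqrt (lam - μa)
      - Real.sqrt (1 + lam) / Real.sqrt (lam - μb)
      = Real.sqrt (1 + lam) * (1 / Real.sqrt (lam - μa) - 1 / Real.sqrt (lam - μb)) := by
    ring
  rw [h1, abs_mul, abs_of_nonneg (Real.sqrt_nonneg _)]
  have h2 := inv_sqrt_lip hε hA hB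
  have hab : |lam - μa - (lam - μb)| = |μa - μb| := by
    rw [abs_sub_comm]; ring_nf
  rw [hab] at h2
  have h3 : Real.sqrt (1 + lam) * |1 / Real.sqrt (lam - μa) - 1 / Real.sqrt (lam - μb)|
      ≤ Real.sqrt (1 + lam) * (|μa - μb| / (2 * ε * Real.sqrt ε)) :=
    mul_le_mul_of_nonneg_left h2 (Real.sqrt_nonneg _)
  refine h3.trans ?_
  -- reduce to coefficient comparison
  have hcoef : Real.sqrt (1 + lam) / (2 * ε * Real.sqrt ε)
      ≤ (1 / (2 * ε)) * Real.sqrt (1 + (Λ + 1) / ε) := by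
    have hdiv : Real.sqrt (1 + lam) / Real.sqrt ε = Real.sqrt ((1 + lam) / ε) := by
      exact (Real.sqrt_div hlampos.le ε).symm
    have hle : (1 + lam) / ε ≤ 1 + (Λ + 1) / ε := by
      rw [div_le_iff₀ hε]
      have : (1 + (Λ + 1) / ε) * ε = ε + (Λ + 1) := by field_simp
      rw [this]; linarith
    calc Real.sqrt (1 + lam) / (2 * ε * Real.sqrt ε)
        = (1 / (2 * ε)) * (Real.sqrt (1 + lam) / Real.sqrt ε) := by ring
      _ ≤ (1 / (2 * ε)) * Real.sqrt (1 + (Λ + 1) / ε) := by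
          rw [hdiv]
          exact mul_le_mul_of_nonneg_left (Real.sqrt_le_sqrt hle) (by positivity)
  calc Real.sqrt (1 + lam) * (|μa - μb| / (2 * ε * Real.sqrt ε))
      = (Real.sqrt (1 + lam) / (2 * ε * Real.sqrt ε)) * |μa - μb| := by ring
    _ ≤ (1 / (2 * ε)) * Real.sqrt (1 + (Λ + 1) / ε) * |μa - μb| :=
        mul_le_mul_of_nonneg_right hcoef (abs_nonneg _)
end

section
/- Under the hypotheses of the previous statement, suppose in addition that λ₀(δ) − λ₁(δ) changes sign on [δ_l, δ_r] and that sup|f₀| + sup|f₁| ≤ min( max_δ (λ₀(δ) − λ₁(δ)), −min_δ(λ₀(δ) − λ₁(δ)) ) where both max and −min are nonnegative. Then there exists δ* ∈ [δ_l, δ_r] with μ₀(δ*) = μ₁(δ*) (where μ_i are the unique continuous solutions of λ_i(δ) − μ + f_i(δ,μ) = 0). -/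
/-- If `λ₀ - λ₁` changes sign and `f₀, f₁` are uniformly small, the two
implicit curves `μ₀(δ)`, `μ₁(δ)` intersect. -/
theorem stmt12 (δl δr μl μr : ℝ) (hδ : δl ≤ δr) (hμ : μl < μr)
    (f₀ f₁ : ℝ → ℝ → ℝ) (lam₀ lam₁ : ℝ → ℝ) (C₀ C₁ : ℝ)
    (hC₀ : 0 ≤ C₀) (hC₀1 : C₀ < 1) (hC₁ : 0 ≤ C₁) (hC₁1 : C₁ < 1)
    (hf₀cont : ContinuousOn (fun p : ℝ × ℝ => f₀ p.1 p.2)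
      (Set.Icc δl δr ×ˢ Set.Icc μl μr))
    (hf₁cont : ContinuousOn (fun p : ℝ × ℝ => f₁ p.1 p.2)
      (Set.Icc δl δr ×ˢ Set.Icc μl μr))
    (hLip₀ : ∀ δ ∈ Set.Icc δl δr, ∀ μa ∈ Set.Icc μl μr, ∀ μb ∈ Set.Icc μl μr,
      |f₀ δ μa - f₀ δ μb| ≤ C₀ * |μa - μb|)
    (hLip₁ : ∀ δ ∈ Set.Icc δl δr, ∀ μa ∈ Set.Icc μl μr, ∀ μb ∈ Set.Icc μl μr,
      |f₁ δ μa - f₁ δ μb| ≤ C₁ * |μa - μb|)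
    (hlam₀cont : ContinuousOn lam₀ (Set.Icc δl δr))
    (hlam₁cont : ContinuousOn lam₁ (Set.Icc δl δr))
    -- points where `λ₀ - λ₁` attains its max (≥ 0) and min (≤ 0)
    (δmax δmin : ℝ) (hδmax : δmax ∈ Set.Icc δl δr) (hδmin : δmin ∈ Set.Icc δl δr)
    (hmax : ∀ δ ∈ Set.Icc δl δr, lam₀ δ - lam₁ δ ≤ lam₀ δmax - lam₁ δmax)
    (hmin : ∀ δ ∈ Set.Icc δl δr, lam₀ δmin - lam₁ δmin ≤ lam₀ δ - lam₁ δ)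
    (hmax0 : 0 ≤ lam₀ δmax - lam₁ δmax) (hmin0 : lam₀ δmin - lam₁ δmin ≤ 0)
    -- uniform smallness of the perturbations
    (hsmall : ∀ δ ∈ Set.Icc δl δr, ∀ μ ∈ Set.Icc μl μr,
      |f₀ δ μ| + |f₁ δ μ| ≤
        min (lam₀ δmax - lam₁ δmax) (-(lam₀ δmin - lam₁ δmin)))
    -- the unique continuous implicit solutions
    (μ₀ μ₁ : ℝ → ℝ)
    (hμ₀cont : ContinuousOn μ₀ (Set.Icc δl δr))
    (hμ₁cont : ContinuousOn μ₁ (Set.Icc δl δr))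
    (hμ₀sol : ∀ δ ∈ Set.Icc δl δr,
      μ₀ δ ∈ Set.Ioo μl μr ∧ lam₀ δ - μ₀ δ + f₀ δ (μ₀ δ) = 0)
    (hμ₁sol : ∀ δ ∈ Set.Icc δl δr,
      μ₁ δ ∈ Set.Ioo μl μr ∧ lam₁ δ - μ₁ δ + f₁ δ (μ₁ δ) = 0) :
    ∃ δs ∈ Set.Icc δl δr, μ₀ δs = μ₁ δs := by
  set g : ℝ → ℝ := fun δ => μ₀ δ - μ₁ δ with hg
  have hgcont : ContinuousOn g (Set.Icc δl δr) := hμ₀cont.sub hμ₁cont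
  have key : ∀ δ ∈ Set.Icc δl δr,
      g δ = (lam₀ δ - lam₁ δ) + (f₀ δ (μ₀ δ) - f₁ δ (μ₁ δ)) := by
    intro δ hδ'
    have h0 := (hμ₀sol δ hδ').2
    have h1 := (hμ₁sol δ hδ').2
    simp only [hg]
    linarith
  have hgmax : 0 ≤ g δmax := by
    have hk := key δmax hδmax
    have h0 := (hμ₀sol δmax hδmax).1
    have h1 := (hμ₁sol δmax hδmax).1
    have h0' : μ₀ δmax ∈ Set.Icc μl μr := Set.mem_Icc_of_Ioo h0
    have h1' : μ₁ δmax ∈ Set.Icc μl μr := Set.mem_Icc_of_Ioo h1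
    have hsm := (hsmall δmax hδmax (μ₀ δmax) h0').trans (min_le_left _ _)
    have hlip := hLip₁ δmax hδmax (μ₁ δmax) h1' (μ₀ δmax) h0'
    -- f₁(μ₁) = f₁(μ₀) + (f₁(μ₁) - f₁(μ₀)), with |f₁(μ₁)-f₁(μ₀)| ≤ C₁ |g δmax|
    have habs : |μ₁ δmax - μ₀ δmax| = |g δmax| := by
      simp only [hg]; rw [abs_sub_comm]
    rw [habs] at hlip
    by_contra hneg
    push_neg at hneg
    have hgabs : |g δmax| = -(g δmax) := abs_of_neg hneg
    have e0 := neg_abs_le (f₀ δmax (μ₀ δmax))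
    have e1 := le_abs_self (f₁ δmax (μ₁ δmax) - f₁ δmax (μ₀ δmax))
    have e2 := le_abs_self (f₁ δmax (μ₀ δmax))
    -- g ≥ M - |f₀(μ₀)| - |f₁(μ₀)| - C₁|g| ≥ -C₁|g| = C₁ g
    nlinarith [hk, hsm, hlip, hgabs]
  have hgmin : g δmin ≤ 0 := by
    have hk := key δmin hδmin
    have h0 := (hμ₀sol δmin hδmin).1
    have h1 := (hμ₁sol δmin hδmin).1
    have h0' : μ₀ δmin ∈ Set.Icc μl μr := Set.mem_Icc_of_Ioo h0
    have h1' : μ₁ δmin ∈ Set.Icc μl μr := Set.mem_Icc_of_Ioo h1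
    have hsm := (hsmall δmin hδmin (μ₁ δmin) h1').trans (min_le_right _ _)
    have hlip := hLip₀ δmin hδmin (μ₀ δmin) h0' (μ₁ δmin) h1'
    have habs : |μ₀ δmin - μ₁ δmin| = |g δmin| := by simp only [hg]
    rw [habs] at hlip
    by_contra hneg
    push_neg at hneg
    have hgabs : |g δmin| = g δmin := abs_of_pos hneg
    have e0 := le_abs_self (f₀ δmin (μ₀ δmin) - f₀ δmin (μ₁ δmin))
    have e1 := le_abs_self (f₀ δmin (μ₁ δmin))
    have e2 := neg_abs_le (f₁ δmin (μ₁ δmin))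
    nlinarith [hk, hsm, hlip, hgabs]
  have hsub : Set.uIcc δmin δmax ⊆ Set.Icc δl δr := Set.uIcc_subset_Icc hδmin hδmax
  have h0mem : (0 : ℝ) ∈ Set.uIcc (g δmin) (g δmax) := by
    rw [Set.mem_uIcc]; left; exact ⟨hgmin, hgmax⟩
  obtain ⟨δs, hδs, hgs⟩ := intermediate_value_uIcc (hgcont.mono hsub) h0mem
  exact ⟨δs, hsub hδs, sub_eq_zero.mp hgs⟩
end
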